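/- arXiv:2008.07115 — 3 statements merged into one kernel-verified Lean document; each statement's English description precedes it below -/
import Mathlib

section
/- Let E be a complex Banach space, let T and P be continuous linear operators on E with P ∘ P = P, and let c ∈ ℂ. If T ∘ T − c² • P is a compact operator, then every accumulation point of the spectrum of T belongs to the set {0, c, −c}. -/
/-! With `K = T² - c²P` compact and `P² = P`, the operator `T²(T² - c²) = K(T² - c²) + c²PK` is
compact. If `z` accumulates in the spectrum of `T`, then `q(z)`, for `q = X²(X² - c²)`, accumulates
in the spectrum of `q(T) = T²(T² - c²)`: the spectrum of `q(T)` contains `q(σ(T))`, and `q` has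
finite fibres. A nonzero point of the spectrum of a compact operator is an eigenvalue (Fredholm
alternative), and Riesz's lemma shows that only finitely many eigenvalues have modulus `≥ δ > 0`.
So `q(z) = 0`, i.e. `z ∈ {0, c, -c}`. -/

open Filter Topology Polynomial Module End

section AccPt

variable {X Y : Type*} [TopologicalSpace X] [T1Space X] [TopologicalSpace Y]

theorem Set.Finite.not_accPt {s : Set X} (hs : s.Finite) (x : X) : ¬ AccPt x (𝓟 s) := by
  rw [accPt_iff_frequently, not_frequently]
  filter_upwards [hs.sdiff.isClosed.isOpen_compl.mem_nhds (by simp : x ∉ s \ {x})]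
    with y hy ⟨hyx, hys⟩ using hy ⟨hys, hyx⟩

theorem AccPt.image_of_finite_preimage {f : X → Y} {x : X} {s : Set X} (h : AccPt x (𝓟 s))
    (hf : ContinuousAt f x) (hfin : (f ⁻¹' {f x}).Finite) : AccPt (f x) (𝓟 (f '' s)) := by
  rw [accPt_iff_frequently] at h ⊢
  have hnear : ∀ᶠ y in 𝓝 x, y ∉ f ⁻¹' {f x} \ {x} :=
    hfin.sdiff.isClosed.isOpen_compl.mem_nhds (by simp)
  refine hf.frequently ((h.and_eventually hnear).mono ?_)
  rintro y ⟨⟨hyx, hys⟩, hy⟩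
  exact ⟨fun hfy => hy ⟨hfy, hyx⟩, Set.mem_image_of_mem f hys⟩

end AccPt

theorem Polynomial.finite_preimage_eval_singleton {R : Type*} [CommRing R] [IsDomain R]
    {p : R[X]} (hp : 0 < p.degree) (a : R) : (p.eval ⁻¹' {a}).Finite := by
  rw [preimage_eval_singleton (by rintro rfl; exact hp.not_ge degree_C_le)]
  exact rootSet_finite _ _

namespace IsCompactOperator

variable {𝕜 X : Type*} [NontriviallyNormedField 𝕜] [NormedAddCommGroup X] [NormedSpace 𝕜 X]

theorem exists_norm_sub_lt {T : X →L[𝕜] X} (hT : IsCompactOperator T) {x : ℕ → X} {R : ℝ}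
    (hx : ∀ n, ‖x n‖ ≤ R) {ε : ℝ} (hε : 0 < ε) : ∃ m n, m < n ∧ ‖T (x n) - T (x m)‖ < ε := by
  obtain ⟨K, hK, hTK⟩ := hT.image_closedBall_subset_compact R
  obtain ⟨_, _, φ, hφ, hlim⟩ := hK.tendsto_subseq fun n => hTK ⟨x n, by simpa using hx n, rfl⟩
  obtain ⟨N, hN⟩ := Metric.cauchySeq_iff'.1 hlim.cauchySeq ε hε
  exact ⟨φ N, φ (N + 1), hφ N.lt_succ_self, by simpa [dist_eq_norm] using hN (N + 1) N.le_succ⟩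

theorem not_of_strictMono_of_sub_smul_mem {Q : X →L[𝕜] X} {Y : ℕ → Submodule 𝕜 X}
    (hY : StrictMono Y) (hYc : ∀ n, IsClosed (Y n : Set X)) {μ : ℕ → 𝕜} {δ : ℝ} (hδ : 0 < δ)
    (hμ : ∀ n, δ ≤ ‖μ n‖) (hQ : ∀ n, ∀ x ∈ Y (n + 1), Q x - μ n • x ∈ Y n) :
    ¬ IsCompactOperator Q := by
  intro hQc
  have hinv : ∀ n, ∀ x ∈ Y n, Q x ∈ Y n := fun n x hx => by
    simpa using (Y n).add_mem (hQ n x (hY.monotone n.le_succ hx)) ((Y n).smul_mem (μ n) hx)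
  obtain ⟨c, hc⟩ := NormedField.exists_one_lt_norm 𝕜
  have hriesz : ∀ n, ∃ x ∈ Y (n + 1), ‖x‖ ≤ ‖c‖ + 1 ∧ ∀ y ∈ Y n, 1 ≤ ‖x - y‖ := fun n => by
    have hcl : IsClosed ((Y n).comap (Y (n + 1)).subtype : Set (Y (n + 1))) :=
      (hYc n).preimage continuous_subtype_val
    obtain ⟨v, hv, hvn⟩ := SetLike.exists_of_lt (hY n.lt_succ_self)
    obtain ⟨⟨x, hx⟩, hxn, hxy⟩ := riesz_lemma_of_norm_lt hc (lt_add_one _) hcl ⟨⟨v, hv⟩, hvn⟩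
    exact ⟨x, hx, hxn, fun y hy => hxy ⟨y, hY.monotone n.le_succ hy⟩ hy⟩
  choose x hxY hxR hxsep using hriesz
  -- `Q (x n) - Q (x m) ∈ μ n • (x n - Y n)` for `m < n`, so the images of the `x n` are `δ`-apart
  obtain ⟨m, n, hmn, hlt⟩ := hQc.exists_norm_sub_lt hxR hδ
  have hμn : μ n ≠ 0 := norm_pos_iff.1 (hδ.trans_le (hμ n))
  set u := (μ n)⁻¹ • (Q (x m) - (Q (x n) - μ n • x n))
  have hu : u ∈ Y n := (Y n).smul_mem _ <| (Y n).sub_mem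
    (hinv n _ (hY.monotone hmn (hxY m))) (hQ n _ (hxY n))
  have hdiff : Q (x n) - Q (x m) = μ n • (x n - u) := by
    rw [smul_sub, smul_inv_smul₀ hμn]
    abel
  refine lt_irrefl δ ?_
  calc δ ≤ ‖μ n‖ * 1 := by rw [mul_one]; exact hμ n
    _ ≤ ‖μ n‖ * ‖x n - u‖ := by gcongr; exact hxsep n u hu
    _ = ‖Q (x n) - Q (x m)‖ := by rw [hdiff, norm_smul]
    _ < δ := hlt

theorem finite_setOf_le_norm_hasEigenvalue [CompleteSpace 𝕜] {T : X →L[𝕜] X}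
    (hT : IsCompactOperator T) {δ : ℝ} (hδ : 0 < δ) :
    {μ : 𝕜 | δ ≤ ‖μ‖ ∧ HasEigenvalue (T : End 𝕜 X) μ}.Finite := by
  by_contra hinf
  obtain ⟨μ, hμ⟩ := (Set.not_finite.1 hinf).natEmbedding
  choose e he using fun n => (μ n).2.2.exists_hasEigenvector
  let Y n := Submodule.span 𝕜 (e '' Set.Iio n)
  have hli : LinearIndependent 𝕜 e :=
    eigenvectors_linearIndependent' (T : End 𝕜 X) (fun n => (μ n : 𝕜))
      (fun m n h => hμ (Subtype.ext h)) e he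
  have hY : StrictMono Y := strictMono_nat_of_lt_succ fun n => by
    refine SetLike.lt_iff_le_and_exists.2 ⟨Submodule.span_mono (Set.image_mono ?_), e n,
      Submodule.subset_span ⟨n, n.lt_succ_self, rfl⟩, hli.notMem_span_image (by simp)⟩
    exact fun k hk => Nat.lt_succ_of_lt hk
  have hYc n : IsClosed (Y n : Set X) := by
    have := FiniteDimensional.span_of_finite 𝕜 ((Set.finite_Iio n).image e)
    exact (Y n).closed_of_finiteDimensional
  refine not_of_strictMono_of_sub_smul_mem hY hYc hδ (fun n => (μ n).2.1) (fun n => ?_) hT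
  have : Y (n + 1) ≤ (Y n).comap ((T : End 𝕜 X) - (μ n : 𝕜) • 1) := by
    rw [Submodule.span_le]
    rintro _ ⟨k, hk, rfl⟩
    have hTe : T (e k) = (μ k : 𝕜) • e k := (he k).apply_eq_smul
    rcases Nat.lt_succ_iff_lt_or_eq.1 hk with hk | rfl
    · simpa [hTe, ← sub_smul] using
        (Y n).smul_mem ((μ k : 𝕜) - μ n) (Submodule.subset_span ⟨k, hk, rfl⟩)
    · simp [hTe]
  exact fun x hx => by simpa using this hx

theorem not_accPt_spectrum [CompleteSpace 𝕜] [CompleteSpace X] {T : X →L[𝕜] X}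
    (hT : IsCompactOperator T) {w : 𝕜} (hw : w ≠ 0) : ¬ AccPt w (𝓟 (spectrum 𝕜 T)) := by
  intro hacc
  have hw' : 0 < ‖w‖ / 2 := half_pos (norm_pos_iff.2 hw)
  have hU : {μ : 𝕜 | ‖w‖ / 2 < ‖μ‖} ∈ 𝓝 w :=
    (isOpen_lt continuous_const continuous_norm).mem_nhds (half_lt_self (norm_pos_iff.2 hw))
  refine ((hT.finite_setOf_le_norm_hasEigenvalue hw').subset ?_).not_accPt w (hacc.nhds_inter hU)
  rintro μ ⟨hμw, hμ⟩
  exact ⟨hμw.le, (hT.hasEigenvalue_iff_mem_spectrum (norm_pos_iff.1 (hw'.trans hμw))).2 hμ⟩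

theorem mul_sub_smul_one_of_isIdempotentElem {A P : X →L[𝕜] X} (hP : IsIdempotentElem P) {a : 𝕜}
    (h : IsCompactOperator (A - a • P)) : IsCompactOperator ⇑(A * (A - a • 1)) := by
  set K := A - a • P
  have hA : A * (A - a • 1) = K * (A - a • 1) + a • (P * K) := by
    simp only [K, mul_sub, sub_mul, smul_mul_assoc, mul_smul_comm, smul_sub, hP.eq, mul_one,
      smul_smul]
    abel
  rw [hA, FunLike.coe_add, FunLike.coe_smul]
  exact (h.comp_clm _).add ((h.clm_comp P).smul a)

end IsCompactOperator

theorem stmt0 {E : Type*} [NormedAddCommGroup E] [NormedSpace ℂ E] [CompleteSpace E]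
    (T P : E →L[ℂ] E) (hP : P ∘L P = P) (c : ℂ)
    (hcpt : IsCompactOperator (T ∘L T - c ^ 2 • P))
    (z : ℂ) (hz : AccPt z (𝓟 (spectrum ℂ T))) :
    z ∈ ({0, c, -c} : Set ℂ) := by
  by_contra hz'
  set q : ℂ[X] := X ^ 2 * (X ^ 2 - C (c ^ 2))
  have hq : aeval T q = T * T * (T * T - c ^ 2 • 1) := by
    simp [q, pow_two, Algebra.algebraMap_eq_smul_one, smul_smul]
  have hQ : IsCompactOperator (aeval T q) := by
    rw [hq]
    exact hcpt.mul_sub_smul_one_of_isIdempotentElem hP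
  have hqz : q.eval z ≠ 0 := by
    simp only [Set.mem_insert_iff, Set.mem_singleton_iff, not_or] at hz'
    obtain ⟨hz0, hzc, hznc⟩ := hz'
    have : q.eval z = z ^ 2 * ((z - c) * (z + c)) := by
      simp only [q, eval_mul, eval_pow, eval_X, eval_sub, eval_C]; ring
    rw [this]
    exact mul_ne_zero (pow_ne_zero 2 hz0)
      (mul_ne_zero (sub_ne_zero.2 hzc) fun h => hznc (eq_neg_of_add_eq_zero_left h))
  have hdeg : 0 < q.degree := by
    rw [degree_mul, degree_X_pow, degree_X_pow_sub_C two_pos]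
    decide
  refine hQ.not_accPt_spectrum hqz ((hz.image_of_finite_preimage q.continuous.continuousAt
    (finite_preimage_eval_singleton hdeg _)).mono ?_)
  exact principal_mono.2 (spectrum.subset_polynomial_aeval T q)
end

section
/- Let λ, μ ∈ ℝ, let ν ∈ ℝ², let U ⊆ ℝ² be open, and let p : U → ℝ be twice continuously differentiable on U. Then at every x ∈ U the identity T(∂,ν)(∇p) = (λ + 2μ)(Δp)ν + 2μ M(∂,ν)(∇p) holds. -/
/-!
The Jacobian of `∇p` is the Hessian of `p`, which is symmetric at every point where `p` is `C²`
(Schwarz). For a symmetric Jacobian the rotation term `∂₂w₁ − ∂₁w₂` of the traction vanishes and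
`∂_ν w = (Dw)ᵀν`, after which the identity is linear algebra.
-/

/-- `pd w x k j` is the partial derivative `∂ₖ wⱼ` of the vector field `w : ℝ² → ℝ²`
at the point `x`, indexed so that `k = 0, 1` corresponds to `∂₁, ∂₂`. -/
noncomputable def pd (w : (Fin 2 → ℝ) → (Fin 2 → ℝ)) (x : Fin 2 → ℝ) (k j : Fin 2) : ℝ :=
  fderiv ℝ w x (Pi.single k 1) j

/-- `grad p y` is the gradient `∇p = (∂₁p, ∂₂p)` of a scalar field `p : ℝ² → ℝ` at `y`. -/
noncomputable def grad (p : (Fin 2 → ℝ) → ℝ) (y : Fin 2 → ℝ) (j : Fin 2) : ℝ :=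
  fderiv ℝ p y (Pi.single j 1)

lemma pd_grad_eq_fderiv_fderiv {p : (Fin 2 → ℝ) → ℝ} {x : Fin 2 → ℝ}
    (hp : DifferentiableAt ℝ (fderiv ℝ p) x) (k j : Fin 2) :
    pd (grad p) x k j = fderiv ℝ (fderiv ℝ p) x (Pi.single k 1) (Pi.single j 1) := by
  let evalBasis : ((Fin 2 → ℝ) →L[ℝ] ℝ) →L[ℝ] (Fin 2 → ℝ) :=
    ContinuousLinearMap.pi fun j => ContinuousLinearMap.apply ℝ ℝ (Pi.single j 1)
  have hgrad : grad p = evalBasis ∘ fderiv ℝ p := rfl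
  have hD : fderiv ℝ (grad p) x = evalBasis.comp (fderiv ℝ (fderiv ℝ p) x) := by
    rw [hgrad]
    exact (evalBasis.hasFDerivAt.comp x hp.hasFDerivAt).fderiv
  simp [pd, hD, evalBasis]

lemma pd_grad_comm {p : (Fin 2 → ℝ) → ℝ} {x : Fin 2 → ℝ} (hp : ContDiffAt ℝ 2 p x)
    (k j : Fin 2) : pd (grad p) x k j = pd (grad p) x j k := by
  have hD : DifferentiableAt ℝ (fderiv ℝ p) x :=
    (hp.fderiv_right (m := 1) (by norm_num)).differentiableAt (by norm_num)
  rw [pd_grad_eq_fderiv_fderiv hD, pd_grad_eq_fderiv_fderiv hD]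
  exact hp.isSymmSndFDerivAt (by simp) _ _

lemma traction_eq_of_symm (lam mu : ℝ) (ν : Fin 2 → ℝ) {H : Fin 2 → Fin 2 → ℝ}
    (hH : H 1 0 = H 0 1) (j : Fin 2) :
    2 * mu * (ν 0 * H 0 j + ν 1 * H 1 j) + lam * (H 0 0 + H 1 1) * ν j
        + mu * (H 1 0 - H 0 1) * (![-(ν 1), ν 0] j)
      = (lam + 2 * mu) * (H 0 0 + H 1 1) * ν j
        + 2 * mu * (ν 0 * H j 0 + ν 1 * H j 1 - ν j * (H 0 0 + H 1 1)) := by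
  fin_cases j <;> simp only [Fin.zero_eta, Fin.mk_one, hH] <;> ring

theorem stmt10 (lam mu : ℝ) (ν : Fin 2 → ℝ) (U : Set (Fin 2 → ℝ)) (hU : IsOpen U)
    (p : (Fin 2 → ℝ) → ℝ) (hp : ContDiffOn ℝ 2 p U) :
    ∀ x ∈ U, ∀ j : Fin 2,
      -- T(∂,ν)(∇p) = 2μ ∂_ν(∇p) + λ(∇·∇p)ν + μ(∂₂(∇p)₁ − ∂₁(∇p)₂)ν^⊥
      2 * mu * (ν 0 * pd (grad p) x 0 j + ν 1 * pd (grad p) x 1 j)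
        + lam * (pd (grad p) x 0 0 + pd (grad p) x 1 1) * ν j
        + mu * (pd (grad p) x 1 0 - pd (grad p) x 0 1) * (![-(ν 1), ν 0] j)
      -- = (λ+2μ)(Δp)ν + 2μ M(∂,ν)(∇p)
      = (lam + 2 * mu) * (pd (grad p) x 0 0 + pd (grad p) x 1 1) * ν j
        + 2 * mu * (ν 0 * pd (grad p) x j 0 + ν 1 * pd (grad p) x j 1
            - ν j * (pd (grad p) x 0 0 + pd (grad p) x 1 1)) := by
  intro x hx j
  have hpx : ContDiffAt ℝ 2 p x := hp.contDiffAt (hU.mem_nhds hx)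
  exact traction_eq_of_symm lam mu ν (pd_grad_comm hpx 1 0) j
end

section
/- Let x = (x₁, x₂) : ℝ → ℝ² be twice continuously differentiable on a neighborhood of t with x'(t) ≠ 0, and set ν := (x₂'(t), −x₁'(t))/‖x'(t)‖. Then the limit as τ → t with τ ≠ t of ⟨ν, x(τ) − x(t)⟩ / ‖x(τ) − x(t)‖² exists and equals ⟨ν, x''(t)⟩ / (2‖x'(t)‖²). -/
/-!
Since `ν ⟂ x'(t)`, the numerator `⟪ν, x τ - x t⟫` vanishes to second order at `t`, so by
L'Hôpital's rule it behaves like `⟪ν, x''(t)⟫ (τ - t)² / 2`, while the denominator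
`‖x τ - x t‖²` behaves like `‖x'(t)‖² (τ - t)²`.
-/

open Filter Topology
open scoped RealInnerProductSpace

theorem tendsto_div_sub_sq_of_hasDerivAt {g g' : ℝ → ℝ} {t c : ℝ}
    (hg : ∀ᶠ τ in 𝓝 t, HasDerivAt g (g' τ) τ) (hgt : g t = 0) (hg't : g' t = 0)
    (hg' : HasDerivAt g' c t) :
    Tendsto (fun τ => g τ / (τ - t) ^ 2) (𝓝[≠] t) (𝓝 (c / 2)) := by
  refine HasDerivAt.lhopital_zero_nhdsNE (g' := fun τ => 2 * (τ - t))
    (hg.filter_mono nhdsWithin_le_nhds) ?_ ?_ ?_ ?_ ?_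
  · filter_upwards with τ
    simpa [mul_comm] using ((hasDerivAt_id τ).sub_const t).fun_pow 2
  · filter_upwards [self_mem_nhdsWithin] with τ hτ
    simpa [sub_eq_zero] using hτ
  · simpa [hgt] using hg.self_of_nhds.continuousAt.tendsto.mono_left nhdsWithin_le_nhds
  · have h : Continuous fun τ : ℝ => (τ - t) ^ 2 := by fun_prop
    simpa using h.continuousAt.tendsto.mono_left (nhdsWithin_le_nhds (a := t) (s := {t}ᶜ))
  · refine ((hasDerivAt_iff_tendsto_slope.mp hg').div_const 2).congr fun τ => ?_
    rw [slope_def_field, hg't, sub_zero, div_div, mul_comm]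

section InnerProductSpace

variable {E : Type*} [NormedAddCommGroup E] [InnerProductSpace ℝ E] {x : ℝ → E} {t : ℝ}
  {a ν : E}

theorem tendsto_inner_sub_div_sub_sq (hx : ∀ᶠ τ in 𝓝 t, DifferentiableAt ℝ x τ)
    (hx' : HasDerivAt (deriv x) a t) (hν : ⟪ν, deriv x t⟫ = 0) :
    Tendsto (fun τ => ⟪ν, x τ - x t⟫ / (τ - t) ^ 2) (𝓝[≠] t) (𝓝 (⟪ν, a⟫ / 2)) := by
  refine tendsto_div_sub_sq_of_hasDerivAt (g' := fun τ => ⟪ν, deriv x τ⟫) ?_ (by simp) hν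
    (by simpa using (hasDerivAt_const t ν).inner ℝ hx')
  filter_upwards [hx] with τ hτ
  simpa using (hasDerivAt_const τ ν).inner ℝ (hτ.hasDerivAt.sub_const (x t))

theorem tendsto_norm_sub_sq_div_sub_sq {v : E} (hx : HasDerivAt x v t) :
    Tendsto (fun τ => ‖x τ - x t‖ ^ 2 / (τ - t) ^ 2) (𝓝[≠] t) (𝓝 (‖v‖ ^ 2)) := by
  refine ((hasDerivAt_iff_tendsto_slope.mp hx).norm.pow 2).congr fun τ => ?_
  rw [slope_def_module, norm_smul, norm_inv, Real.norm_eq_abs, mul_pow, inv_pow, sq_abs,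
    inv_mul_eq_div]

theorem tendsto_inner_sub_div_norm_sub_sq (hx : ∀ᶠ τ in 𝓝 t, DifferentiableAt ℝ x τ)
    (hx' : HasDerivAt (deriv x) a t) (hv : deriv x t ≠ 0) (hν : ⟪ν, deriv x t⟫ = 0) :
    Tendsto (fun τ => ⟪ν, x τ - x t⟫ / ‖x τ - x t‖ ^ 2) (𝓝[≠] t)
      (𝓝 (⟪ν, a⟫ / (2 * ‖deriv x t‖ ^ 2))) := by
  have hlim := (tendsto_inner_sub_div_sub_sq hx hx' hν).div
    (tendsto_norm_sub_sq_div_sub_sq hx.self_of_nhds.hasDerivAt) (by positivity)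
  rw [div_div] at hlim
  refine hlim.congr' ?_
  filter_upwards [self_mem_nhdsWithin] with τ hτ
  have : (τ - t) ^ 2 ≠ 0 := pow_ne_zero 2 (sub_ne_zero.mpr hτ)
  exact div_div_div_cancel_right₀ this _ _

end InnerProductSpace

theorem inner_rotate_self (v : EuclideanSpace ℝ (Fin 2)) :
    ⟪(WithLp.equiv 2 (Fin 2 → ℝ)).symm ![v 1, -v 0], v⟫ = 0 := by
  simp only [WithLp.equiv_symm_apply, PiLp.inner_apply, RCLike.inner_apply, Real.ringHom_apply,
    Fin.sum_univ_two, Matrix.cons_val_zero, Matrix.cons_val_one, Matrix.cons_val_fin_one]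
  ring

theorem ContDiffAt.hasDerivAt_deriv {F : Type*} [NormedAddCommGroup F] [NormedSpace ℝ F]
    {f : ℝ → F} {t : ℝ} (hf : ContDiffAt ℝ 2 f t) :
    HasDerivAt (deriv f) (iteratedDeriv 2 f t) t := by
  rw [iteratedDeriv_succ, iteratedDeriv_one]
  exact ((hf.derivWithin (m := 1) le_rfl).differentiableAt one_ne_zero).hasDerivAt

theorem stmt15 (x : ℝ → EuclideanSpace ℝ (Fin 2)) (t : ℝ)
    (hx : ContDiffAt ℝ 2 x t) (hx' : deriv x t ≠ 0)
    (ν : EuclideanSpace ℝ (Fin 2))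
    (hν : ν = ‖deriv x t‖⁻¹ •
      (WithLp.equiv 2 (Fin 2 → ℝ)).symm ![deriv x t 1, -(deriv x t 0)]) :
    Tendsto (fun τ => (inner ℝ ν (x τ - x t) : ℝ) / ‖x τ - x t‖ ^ 2)
      (nhdsWithin t {t}ᶜ)
      (nhds ((inner ℝ ν (iteratedDeriv 2 x t) : ℝ) / (2 * ‖deriv x t‖ ^ 2))) := by
  have hdiff : ∀ᶠ τ in 𝓝 t, DifferentiableAt ℝ x τ :=
    (hx.eventually (by simp)).mono fun τ hτ => hτ.differentiableAt (by simp)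
  have hν_perp : ⟪ν, deriv x t⟫ = 0 := by
    rw [hν, real_inner_smul_left, inner_rotate_self, mul_zero]
  exact tendsto_inner_sub_div_norm_sub_sq hdiff hx.hasDerivAt_deriv hx' hν_perp
end
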